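/- Let H be a quasi-Turaev π-coalgebra, α ∈ π, (V, ρ_V) an α-Yetter–Drinfeld module, and for each λ ∈ π and left H_λ-module X let c_{V,X} : V ⊗ X → ^αX ⊗ V be the bijection whose inverse is ĉ_{V,X}(^αx ⊗ v) = v_{(0,0)} ⊗ v_{(1,λ)} · x. Then for all λ₁, λ₂ ∈ π, every left H_{λ₁}-module X₁ and every left H_{λ₂}-module X₂: c⁻¹_{V,X₁⊗X₂} = a_{V,X₁,X₂} ∘ (c⁻¹_{V,X₁} ⊗ id_{X₂}) ∘ a⁻¹_{^αX₁,V,X₂} ∘ (id_{^αX₁} ⊗ c⁻¹_{V,X₂}) ∘ a_{^αX₁,^αX₂,V}, i.e. the family c_{V,−} satisfies the half-braiding hexagon identity, so that (V, c_{V,−}) is an object of Z_α(Rep(H)). -/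

import Mathlib

open scoped TensorProduct
open TensorProduct

universe u v
set_option maxHeartbeats 1000000

section QH
variable (k : Type u) [Field k] {π : Type v} [Group π]
variable (H : π → Type u) [∀ a, Ring (H a)] [∀ a, Algebra k (H a)]

/-- Transport along equality of group elements, as a `k`-linear map. -/
def castL {a b : π} (e : a = b) : H a →ₗ[k] H b := by subst e; exact LinearMap.id

/-- Transport along equality of group elements, as a `k`-algebra map. -/
def castA {a b : π} (e : a = b) : H a →ₐ[k] H b := by subst e; exact AlgHom.id k _

/-- A quasi-Hopf `π`-coalgebra (quasi-Turaev group coalgebra without the crossing):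
a family of `k`-algebras `{H α}` with comultiplications `Δ_{α,β}`, counit `ε`,
invertible associators `Φ_{α,β,γ}`, antipodes `S_α` and elements `p_α, q_α`. -/
structure QuasiHopfGCoalgebra where
  /-- comultiplication -/
  Δ : ∀ a b : π, H (a * b) →ₐ[k] (H a ⊗[k] H b)
  /-- counit -/
  ε : H 1 →ₐ[k] k
  /-- the associator `Φ_{α,β,γ} ∈ H_α ⊗ H_β ⊗ H_γ` -/
  Φ : ∀ a b c : π, H a ⊗[k] (H b ⊗[k] H c)
  /-- the inverse associator -/
  Φinv : ∀ a b c : π, H a ⊗[k] (H b ⊗[k] H c)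
  Φ_mul_Φinv : ∀ a b c : π, Φ a b c * Φinv a b c = 1
  Φinv_mul_Φ : ∀ a b c : π, Φinv a b c * Φ a b c = 1
  /-- the antipode, a family of bijective `k`-linear maps -/
  S : ∀ a : π, H a ≃ₗ[k] H a⁻¹
  S_one : ∀ a : π, S a 1 = 1
  /-- the antipode is anti-multiplicative -/
  S_mul : ∀ (a : π) (x y : H a), S a (x * y) = S a y * S a x
  p : ∀ a : π, H a
  q : ∀ a : π, H a
  /-- quasi-coassociativity:
  `(id ⊗ Δ_{β,γ})Δ_{α,βγ}(h) ⬝ Φ_{α,β,γ} = Φ_{α,β,γ} ⬝ (Δ_{α,β} ⊗ id)Δ_{αβ,γ}(h)` -/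
  coassoc : ∀ (a b c : π) (h : H (a * b * c)),
    (TensorProduct.map LinearMap.id (Δ b c).toLinearMap)
        ((Δ a (b * c)) (castL k H (mul_assoc a b c) h)) * Φ a b c
      = Φ a b c *
        (TensorProduct.assoc k (H a) (H b) (H c))
          ((TensorProduct.map (Δ a b).toLinearMap LinearMap.id) ((Δ (a * b) c) h))
  /-- right counit law `(id ⊗ ε)Δ_{α,1} = id` -/
  counit_right : ∀ (a : π) (h : H a),
    (TensorProduct.rid k (H a))
      ((TensorProduct.map LinearMap.id (ε : H 1 →ₗ[k] k))
        ((Δ a 1) (castL k H (mul_one a).symm h))) = h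
  /-- left counit law `(ε ⊗ id)Δ_{1,α} = id` -/
  counit_left : ∀ (a : π) (h : H a),
    (TensorProduct.lid k (H a))
      ((TensorProduct.map (ε : H 1 →ₗ[k] k) LinearMap.id)
        ((Δ 1 a) (castL k H (one_mul a).symm h))) = h
  /-- the pentagon identity -/
  pentagon : ∀ a b c d : π,
    ((1 : H a) ⊗ₜ[k] Φ b c d) *
      (TensorProduct.map LinearMap.id
          ((TensorProduct.assoc k (H b) (H c) (H d)).toLinearMap ∘ₗ
            TensorProduct.map (Δ b c).toLinearMap LinearMap.id)
        (Φ a (b * c) d)) *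
      ((TensorProduct.map LinearMap.id (TensorProduct.assoc k (H b) (H c) (H d)).toLinearMap)
        ((TensorProduct.assoc k (H a) (H b ⊗[k] H c) (H d)) ((Φ a b c) ⊗ₜ[k] (1 : H d))))
    = (TensorProduct.map LinearMap.id
          (TensorProduct.map LinearMap.id (Δ c d).toLinearMap) (Φ a b (c * d))) *
      ((TensorProduct.assoc k (H a) (H b) (H c ⊗[k] H d))
        ((TensorProduct.map (Δ a b).toLinearMap LinearMap.id) (Φ (a * b) c d)))
  /-- normalization `(id ⊗ ε ⊗ id)(Φ_{α,1,β}) = 1 ⊗ 1` -/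
  Φ_normal : ∀ a b : π,
    (TensorProduct.map LinearMap.id
      ((TensorProduct.lid k (H b)).toLinearMap ∘ₗ
        TensorProduct.map (ε : H 1 →ₗ[k] k) LinearMap.id) (Φ a 1 b)) = (1 : H a ⊗[k] H b)
  /-- `S_α(h₁) p_{α⁻¹} h₂ = ε(h) p_{α⁻¹}` for `h ∈ H_1` -/
  antipode_p : ∀ (a : π) (h : H 1),
    (LinearMap.mul' k (H a⁻¹) ∘ₗ
        TensorProduct.map (LinearMap.mulRight k (p a⁻¹) ∘ₗ (S a).toLinearMap) LinearMap.id)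
      ((Δ a a⁻¹) (castL k H (mul_inv_cancel a).symm h)) = ε h • p a⁻¹
  /-- `h₁ q_α S_{α⁻¹}(h₂) = ε(h) q_α` for `h ∈ H_1` -/
  antipode_q : ∀ (a : π) (h : H 1),
    (LinearMap.mul' k (H a) ∘ₗ
        TensorProduct.map (LinearMap.mulRight k (q a))
          (castL k H (inv_inv a) ∘ₗ (S a⁻¹).toLinearMap))
      ((Δ a a⁻¹) (castL k H (mul_inv_cancel a).symm h)) = ε h • q a
  /-- `Y¹_α q_α S_{α⁻¹}(Y²_{α⁻¹}) p_α Y³_α = 1_α` where `Φ_{α,α⁻¹,α} = Y¹ ⊗ Y² ⊗ Y³` -/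
  antipode_Φ : ∀ a : π,
    (LinearMap.mul' k (H a) ∘ₗ
      TensorProduct.map (LinearMap.mulRight k (q a))
        (LinearMap.mul' k (H a) ∘ₗ
          TensorProduct.map
            (LinearMap.mulRight k (p a) ∘ₗ castL k H (inv_inv a) ∘ₗ (S a⁻¹).toLinearMap)
            LinearMap.id))
      (Φ a a⁻¹ a) = 1
  /-- `S_{α⁻¹}(y¹_{α⁻¹}) p_α y²_α q_α S_{α⁻¹}(y³_{α⁻¹}) = 1_α`
  where `Φ⁻¹_{α⁻¹,α,α⁻¹} = y¹ ⊗ y² ⊗ y³` -/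
  antipode_Φinv : ∀ a : π,
    (LinearMap.mul' k (H a) ∘ₗ
      TensorProduct.map
        (LinearMap.mulRight k (p a) ∘ₗ castL k H (inv_inv a) ∘ₗ (S a⁻¹).toLinearMap)
        (LinearMap.mul' k (H a) ∘ₗ
          TensorProduct.map (LinearMap.mulRight k (q a))
            (castL k H (inv_inv a) ∘ₗ (S a⁻¹).toLinearMap)))
      (Φinv a⁻¹ a a⁻¹) = 1

namespace QuasiHopfGCoalgebra
variable {k H}
variable (T : QuasiHopfGCoalgebra k H)

/-- `I^R_{α,β} = y¹_α ⊗ y²_β q_β S_{β⁻¹}(y³_{β⁻¹})` where `Φ⁻¹_{α,β,β⁻¹} = y¹ ⊗ y² ⊗ y³` -/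
noncomputable def IR (a b : π) : H a ⊗[k] H b :=
  TensorProduct.map LinearMap.id
    (LinearMap.mul' k (H b) ∘ₗ
      TensorProduct.map (LinearMap.mulRight k (T.q b))
        (castL k H (inv_inv b) ∘ₗ (T.S b⁻¹).toLinearMap))
    (T.Φinv a b b⁻¹)

/-- `J^R_{α,β} = Y¹_α ⊗ S_β⁻¹(p_{β⁻¹} Y³_{β⁻¹}) Y²_β` where `Φ_{α,β,β⁻¹} = Y¹ ⊗ Y² ⊗ Y³` -/
noncomputable def JR (a b : π) : H a ⊗[k] H b :=
  TensorProduct.map LinearMap.id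
    (LinearMap.mul' k (H b) ∘ₗ
      TensorProduct.map ((T.S b).symm.toLinearMap ∘ₗ LinearMap.mulLeft k (T.p b⁻¹))
          LinearMap.id ∘ₗ
        (TensorProduct.comm k (H b) (H b⁻¹)).toLinearMap)
    (T.Φ a b b⁻¹)

/-- `I^L_{α,β} = Y²_α S_α⁻¹(Y¹_{α⁻¹} q_{α⁻¹}) ⊗ Y³_β` where `Φ_{α⁻¹,α,β} = Y¹ ⊗ Y² ⊗ Y³` -/
noncomputable def IL (a b : π) : H a ⊗[k] H b :=
  TensorProduct.map (LinearMap.mul' k (H a)) LinearMap.id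
    ((TensorProduct.assoc k (H a) (H a) (H b)).symm
      ((TensorProduct.leftComm k (H a) (H a) (H b))
        (TensorProduct.map ((T.S a).symm.toLinearMap ∘ₗ LinearMap.mulRight k (T.q a⁻¹))
          LinearMap.id (T.Φ a⁻¹ a b))))

/-- `J^L_{α,β} = S_{α⁻¹}(y¹_{α⁻¹}) p_α y²_α ⊗ y³_β` where `Φ⁻¹_{α⁻¹,α,β} = y¹ ⊗ y² ⊗ y³` -/
noncomputable def JL (a b : π) : H a ⊗[k] H b :=
  TensorProduct.map (LinearMap.mul' k (H a)) LinearMap.id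
    ((TensorProduct.assoc k (H a) (H a) (H b)).symm
      (TensorProduct.map
        (LinearMap.mulRight k (T.p a) ∘ₗ castL k H (inv_inv a) ∘ₗ (T.S a⁻¹).toLinearMap)
        LinearMap.id (T.Φinv a⁻¹ a b)))

/-- the map `x ⊗ y ↦ Δ_{α,β}(x) ⬝ I^R_{α,β} ⬝ (1_α ⊗ S_{β⁻¹}(y))` -/
noncomputable def lmapIR (a b : π) : (H (a * b) ⊗[k] H b⁻¹) →ₗ[k] (H a ⊗[k] H b) :=
  LinearMap.mul' k (H a ⊗[k] H b) ∘ₗ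
    TensorProduct.map
      (LinearMap.mulRight k (T.IR a b) ∘ₗ (T.Δ a b).toLinearMap)
      (TensorProduct.mk k (H a) (H b) 1 ∘ₗ castL k H (inv_inv b) ∘ₗ (T.S b⁻¹).toLinearMap)

/-- the map `x ⊗ y ↦ (1_α ⊗ S_β⁻¹(y)) ⬝ J^R_{α,β} ⬝ Δ_{α,β}(x)` -/
noncomputable def lmapJR (a b : π) : (H (a * b) ⊗[k] H b⁻¹) →ₗ[k] (H a ⊗[k] H b) :=
  LinearMap.mul' k (H a ⊗[k] H b) ∘ₗ
    TensorProduct.map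
      (TensorProduct.mk k (H a) (H b) 1 ∘ₗ (T.S b).symm.toLinearMap)
      (LinearMap.mulLeft k (T.JR a b) ∘ₗ (T.Δ a b).toLinearMap) ∘ₗ
    (TensorProduct.comm k (H (a * b)) (H b⁻¹)).toLinearMap

/-- the map `x ⊗ y ↦ Δ_{α,β}(y) ⬝ I^L_{α,β} ⬝ (S_α⁻¹(x) ⊗ 1_β)` -/
noncomputable def lmapIL (a b : π) : (H a⁻¹ ⊗[k] H (a * b)) →ₗ[k] (H a ⊗[k] H b) :=
  LinearMap.mul' k (H a ⊗[k] H b) ∘ₗ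
    TensorProduct.map
      (LinearMap.mulRight k (T.IL a b) ∘ₗ (T.Δ a b).toLinearMap)
      ((TensorProduct.mk k (H a) (H b)).flip 1 ∘ₗ (T.S a).symm.toLinearMap) ∘ₗ
    (TensorProduct.comm k (H a⁻¹) (H (a * b))).toLinearMap

/-- the map `x ⊗ y ↦ (S_{α⁻¹}(x) ⊗ 1_β) ⬝ J^L_{α,β} ⬝ Δ_{α,β}(y)` -/
noncomputable def lmapJL (a b : π) : (H a⁻¹ ⊗[k] H (a * b)) →ₗ[k] (H a ⊗[k] H b) :=
  LinearMap.mul' k (H a ⊗[k] H b) ∘ₗ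
    TensorProduct.map
      ((TensorProduct.mk k (H a) (H b)).flip 1 ∘ₗ
        castL k H (inv_inv a) ∘ₗ (T.S a⁻¹).toLinearMap)
      (LinearMap.mulLeft k (T.JL a b) ∘ₗ (T.Δ a b).toLinearMap)

end QuasiHopfGCoalgebra

/-- A quasi-Turaev `π`-coalgebra: a quasi-Hopf `π`-coalgebra together with a crossing
`φ_β : H_α → H_{βαβ⁻¹}`. -/
structure QuasiTuraevGCoalgebra extends QuasiHopfGCoalgebra k H where
  /-- the crossing -/
  φ : ∀ b a : π, H a ≃ₐ[k] H (b * a * b⁻¹)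
  /-- the crossing preserves the comultiplication -/
  φ_comul : ∀ (b a c : π) (h : H (a * c)),
    TensorProduct.map (φ b a).toLinearMap (φ b c).toLinearMap ((Δ a c) h)
      = (Δ (b * a * b⁻¹) (b * c * b⁻¹))
          (castL k H (by group) ((φ b (a * c)) h))
  /-- the crossing preserves the counit -/
  φ_counit : ∀ (b : π) (h : H 1),
    ε (castL k H (by group : b * 1 * b⁻¹ = 1) ((φ b 1) h)) = ε h
  /-- the crossing is multiplicative -/
  φ_mul : ∀ (b b' a : π) (h : H a),
    castL k H (by group : b * (b' * a * b'⁻¹) * b⁻¹ = (b * b') * a * (b * b')⁻¹)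
        ((φ b (b' * a * b'⁻¹)) ((φ b' a) h))
      = (φ (b * b') a) h
  /-- the associator is invariant under the crossing -/
  φ_Φ : ∀ e t v a b c : π,
    TensorProduct.map (φ e a).toLinearMap
        (TensorProduct.map (φ t b).toLinearMap (φ v c).toLinearMap) (Φ a b c)
      = Φ (e * a * e⁻¹) (t * b * t⁻¹) (v * c * v⁻¹)

end QH

section PMapComb
/- Combinators for "parameterized linear maps" `A →ₗ[k] (M →ₗ[k] N)`: these let us build
multilinear expressions compositionally. -/
variable {k : Type u} [Field k]
variable {A B M N M' N' P Q : Type u}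
variable [AddCommGroup A] [Module k A] [AddCommGroup B] [Module k B]
variable [AddCommGroup M] [Module k M] [AddCommGroup N] [Module k N]
variable [AddCommGroup M'] [Module k M'] [AddCommGroup N'] [Module k N']
variable [AddCommGroup P] [Module k P] [AddCommGroup Q] [Module k Q]

/-- tensor product of parameterized maps -/
noncomputable def pmapTens (f : A →ₗ[k] M →ₗ[k] N) (g : B →ₗ[k] M' →ₗ[k] N') :
    (A ⊗[k] B) →ₗ[k] (M ⊗[k] M') →ₗ[k] (N ⊗[k] N') :=
  TensorProduct.homTensorHomMap (σ₁₂ := RingHom.id k) (M := M) (N := M') (M₂ := N) (N₂ := N') ∘ₗ TensorProduct.map f g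

/-- composition of parameterized maps: `(pcomp f g) (a ⊗ b) = g b ∘ₗ f a` -/
noncomputable def pcomp (f : A →ₗ[k] M →ₗ[k] N) (g : B →ₗ[k] N →ₗ[k] P) :
    (A ⊗[k] B) →ₗ[k] M →ₗ[k] P :=
  TensorProduct.lift
    ((LinearMap.lcomp k (M →ₗ[k] P) g) ∘ₗ (LinearMap.llcomp k M N P).flip ∘ₗ f)

/-- postcompose a parameterized map with a fixed map -/
noncomputable def ppost (h : N →ₗ[k] P) (f : A →ₗ[k] M →ₗ[k] N) : A →ₗ[k] M →ₗ[k] P :=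
  (LinearMap.llcomp k M N P h) ∘ₗ f

/-- precompose a parameterized map with a fixed map -/
noncomputable def ppre (h : P →ₗ[k] M) (f : A →ₗ[k] M →ₗ[k] N) : A →ₗ[k] P →ₗ[k] N :=
  (LinearMap.lcomp k N h) ∘ₗ f

/-- reparameterize -/
noncomputable def pparam (σ : B →ₗ[k] A) (f : A →ₗ[k] M →ₗ[k] N) : B →ₗ[k] M →ₗ[k] N :=
  f ∘ₗ σ

/-- act on the left tensor factor -/
noncomputable def pleft (P : Type u) [AddCommGroup P] [Module k P]
    (f : A →ₗ[k] M →ₗ[k] N) : A →ₗ[k] (M ⊗[k] P) →ₗ[k] (N ⊗[k] P) :=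
  (LinearMap.rTensorHom P) ∘ₗ f

/-- act on the right tensor factor -/
noncomputable def pright (P : Type u) [AddCommGroup P] [Module k P]
    (f : A →ₗ[k] M →ₗ[k] N) : A →ₗ[k] (P ⊗[k] M) →ₗ[k] (P ⊗[k] N) :=
  (LinearMap.lTensorHom P) ∘ₗ f

end PMapComb

section Modules
variable {k : Type u} [Field k] {π : Type v} [Group π]
variable {H : π → Type u} [∀ a, Ring (H a)] [∀ a, Algebra k (H a)]
variable (T : QuasiTuraevGCoalgebra k H)

namespace QuasiTuraevGCoalgebra

/-- The `H_{αβ}`-module structure on the tensor product of an `H_α`-module and an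
`H_β`-module, through `Δ_{α,β}`. -/
noncomputable def tensAlg {a b : π} {M N : Type u}
    [AddCommGroup M] [Module k M] [AddCommGroup N] [Module k N]
    (ρ : H a →ₐ[k] Module.End k M) (σ : H b →ₐ[k] Module.End k N) :
    H (a * b) →ₐ[k] Module.End k (M ⊗[k] N) :=
  ((Module.endTensorEndAlgHom (R := k) (S := k) (A := k) (M := M) (N := N)).comp
      (Algebra.TensorProduct.map ρ σ)).comp (T.Δ a b)

/-- The conjugate module `^βX`: `X` with the `H_{βαβ⁻¹}`-action `h · x = φ_{β⁻¹}(h) · x`. -/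
noncomputable def conjAlg {a : π} {X : Type u} [AddCommGroup X] [Module k X]
    (ρ : H a →ₐ[k] Module.End k X) (b : π) :
    H (b * a * b⁻¹) →ₐ[k] Module.End k X :=
  (ρ.comp (castA k H (by group : b⁻¹ * (b * a * b⁻¹) * b⁻¹⁻¹ = a))).comp
    (T.φ b⁻¹ (b * a * b⁻¹)).toAlgHom

/-- Evaluation of an action: `H_α ⊗ X → X`. -/
noncomputable def aev {a : π} {X : Type u} [AddCommGroup X] [Module k X]
    (ρ : H a →ₐ[k] Module.End k X) : (H a ⊗[k] X) →ₗ[k] X :=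
  TensorProduct.lift ρ.toLinearMap

/-- The associativity constraint of `Rep(H)`: multiplication by `Φ_{α,β,γ}` composed with
the canonical vector space isomorphism. -/
noncomputable def assocMod {a b c : π} {M₁ M₂ M₃ : Type u}
    [AddCommGroup M₁] [Module k M₁] [AddCommGroup M₂] [Module k M₂]
    [AddCommGroup M₃] [Module k M₃]
    (ρ₁ : H a →ₐ[k] Module.End k M₁) (ρ₂ : H b →ₐ[k] Module.End k M₂)
    (ρ₃ : H c →ₐ[k] Module.End k M₃) :
    ((M₁ ⊗[k] M₂) ⊗[k] M₃) →ₗ[k] (M₁ ⊗[k] (M₂ ⊗[k] M₃)) :=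
  (pmapTens ρ₁.toLinearMap (pmapTens ρ₂.toLinearMap ρ₃.toLinearMap) (T.Φ a b c)) ∘ₗ
    (TensorProduct.assoc k M₁ M₂ M₃).toLinearMap

/-- The inverse associativity constraint of `Rep(H)`. -/
noncomputable def assocModInv {a b c : π} {M₁ M₂ M₃ : Type u}
    [AddCommGroup M₁] [Module k M₁] [AddCommGroup M₂] [Module k M₂]
    [AddCommGroup M₃] [Module k M₃]
    (ρ₁ : H a →ₐ[k] Module.End k M₁) (ρ₂ : H b →ₐ[k] Module.End k M₂)
    (ρ₃ : H c →ₐ[k] Module.End k M₃) :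
    (M₁ ⊗[k] (M₂ ⊗[k] M₃)) →ₗ[k] ((M₁ ⊗[k] M₂) ⊗[k] M₃) :=
  (TensorProduct.assoc k M₁ M₂ M₃).symm.toLinearMap ∘ₗ
    (pmapTens ρ₁.toLinearMap (pmapTens ρ₂.toLinearMap ρ₃.toLinearMap) (T.Φinv a b c))

end QuasiTuraevGCoalgebra
end Modules

section YD
variable {k : Type u} [Field k] {π : Type v} [Group π]
variable {H : π → Type u} [∀ a, Ring (H a)] [∀ a, Algebra k (H a)]

namespace QuasiTuraevGCoalgebra
variable (T : QuasiTuraevGCoalgebra k H)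
variable {a : π} {V : Type u} [AddCommGroup V] [Module k V]

/-- Counitarity `(id ⊗ ε) ∘ ρ_{V,1} = id` of a coaction family. -/
def ydCounitProp (coact : ∀ l : π, V →ₗ[k] V ⊗[k] H l) : Prop :=
  ∀ v : V,
    (TensorProduct.rid k V)
      ((TensorProduct.map LinearMap.id (T.ε : H 1 →ₗ[k] k)) (coact 1 v)) = v

/-- The left-hand side of the Yetter-Drinfeld quasi-coassociativity axiom, as a linear map:
`v ↦ (y²_α·v₍₀,₀₎)₍₀,₀₎ ⊗ ((y²_α·v₍₀,₀₎)₍₁,λ₁₎ y¹_{λ₁} ⊗ y³_{λ₂} v₍₁,λ₂₎)`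
where `y¹ ⊗ y² ⊗ y³ = Φ⁻¹_{λ₁,α,λ₂}`. -/
noncomputable def ydCoassocLHS (ρ : H a →ₐ[k] Module.End k V)
    (coact : ∀ l : π, V →ₗ[k] V ⊗[k] H l) (l₁ l₂ : π) :
    V →ₗ[k] V ⊗[k] (H l₁ ⊗[k] H l₂) :=
  (TensorProduct.assoc k V (H l₁) (H l₂)).toLinearMap ∘ₗ
    ((pparam
        ((TensorProduct.assoc k (H a) (H l₁) (H l₂)).symm.toLinearMap ∘ₗ
          (TensorProduct.leftComm k (H l₁) (H a) (H l₂)).toLinearMap)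
        (pmapTens
          (pcomp ((LinearMap.llcomp k V V (V ⊗[k] H l₁) (coact l₁)) ∘ₗ ρ.toLinearMap)
            (pright V ((LinearMap.mul k (H l₁)).flip)))
          (LinearMap.mul k (H l₂))))
      (T.Φinv l₁ a l₂)) ∘ₗ
    coact l₂

/-- The right-hand side of the Yetter-Drinfeld quasi-coassociativity axiom, as a linear map:
`v ↦ Φ⁻¹_{α,λ₁,λ₂} ⬝ [(ȳ³_α·v)₍₀,₀₎ ⊗ ((ȳ³_α·v)₍₁,λ₁λ₂₎₍₁,λ₁₎ ȳ¹_{λ₁} ⊗ (ȳ³_α·v)₍₁,λ₁λ₂₎₍₂,λ₂₎ ȳ²_{λ₂})]`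
where `ȳ¹ ⊗ ȳ² ⊗ ȳ³ = Φ⁻¹_{λ₁,λ₂,α}`. -/
noncomputable def ydCoassocRHS (ρ : H a →ₐ[k] Module.End k V)
    (coact : ∀ l : π, V →ₗ[k] V ⊗[k] H l) (l₁ l₂ : π) :
    V →ₗ[k] V ⊗[k] (H l₁ ⊗[k] H l₂) :=
  ((pmapTens ρ.toLinearMap
      (pmapTens (Algebra.lmul k (H l₁)).toLinearMap (Algebra.lmul k (H l₂)).toLinearMap))
    (T.Φinv a l₁ l₂)) ∘ₗ
  ((pparam
      ((LinearMap.lTensor (H a) (TensorProduct.comm k (H l₂) (H l₁)).toLinearMap) ∘ₗ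
        (TensorProduct.leftComm k (H l₂) (H a) (H l₁)).toLinearMap ∘ₗ
        (TensorProduct.assoc k (H l₂) (H a) (H l₁)).toLinearMap ∘ₗ
        (TensorProduct.comm k (H l₁) (H l₂ ⊗[k] H a)).toLinearMap)
      (pcomp
        ((LinearMap.llcomp k V V (V ⊗[k] (H l₁ ⊗[k] H l₂))
            ((LinearMap.lTensor V (T.Δ l₁ l₂).toLinearMap) ∘ₗ coact (l₁ * l₂))) ∘ₗ
          ρ.toLinearMap)
        (pright V
          (pmapTens ((LinearMap.mul k (H l₁)).flip) ((LinearMap.mul k (H l₂)).flip)))))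
    (T.Φinv l₁ l₂ a))

/-- The Yetter-Drinfeld quasi-coassociativity axiom. -/
def ydCoassocProp (ρ : H a →ₐ[k] Module.End k V)
    (coact : ∀ l : π, V →ₗ[k] V ⊗[k] H l) : Prop :=
  ∀ l₁ l₂ : π, ydCoassocLHS T ρ coact l₁ l₂ = ydCoassocRHS T ρ coact l₁ l₂

/-- The right-hand side of the Yetter-Drinfeld compatibility axiom, as a map parameterized
by `Δ_{αβα⁻¹,α}(h)`: `(h₁ ⊗ h₂) ↦ (v ↦ (h₂·v)₍₀,₀₎ ⊗ (h₂·v)₍₁,β₎ φ_{α⁻¹}(h₁))`. -/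
noncomputable def ydCompatRHS (ρ : H a →ₐ[k] Module.End k V)
    {b : π} (coactb : V →ₗ[k] V ⊗[k] H b) :
    (H (a * b * a⁻¹) ⊗[k] H a) →ₗ[k] V →ₗ[k] V ⊗[k] H b :=
  pparam (TensorProduct.comm k (H (a * b * a⁻¹)) (H a)).toLinearMap
    (pcomp ((LinearMap.llcomp k V V (V ⊗[k] H b) coactb) ∘ₗ ρ.toLinearMap)
      (pright V
        ((LinearMap.mul k (H b)).flip ∘ₗ
          castL k H (by group : a⁻¹ * (a * b * a⁻¹) * a⁻¹⁻¹ = b) ∘ₗ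
          (T.φ a⁻¹ (a * b * a⁻¹)).toLinearMap)))

/-- The Yetter-Drinfeld compatibility axiom:
`h₍₁,α₎·v₍₀,₀₎ ⊗ h₍₂,β₎ v₍₁,β₎ = (h₍₂,α₎·v)₍₀,₀₎ ⊗ (h₍₂,α₎·v)₍₁,β₎ φ_{α⁻¹}(h₍₁,αβα⁻¹₎)`. -/
def ydCompatProp (ρ : H a →ₐ[k] Module.End k V)
    (coact : ∀ l : π, V →ₗ[k] V ⊗[k] H l) : Prop :=
  ∀ (b : π) (h : H (a * b)) (v : V),
    (T.tensAlg ρ (Algebra.lmul k (H b))) h (coact b v)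
      = (ydCompatRHS T ρ (coact b))
          ((T.Δ (a * b * a⁻¹) a)
            (castA k H (by group : a * b = a * b * a⁻¹ * a) h)) v

/-- `V` is an `α`-Yetter-Drinfeld module over `T` (relative to the `H_α`-action `ρ` and
the coaction family `coact`). -/
def IsYD (ρ : H a →ₐ[k] Module.End k V)
    (coact : ∀ l : π, V →ₗ[k] V ⊗[k] H l) : Prop :=
  ydCounitProp T coact ∧ ydCoassocProp T ρ coact ∧ ydCompatProp T ρ coact

end QuasiTuraevGCoalgebra
end YD

section Braid
variable {k : Type u} [Field k] {π : Type v} [Group π]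
variable {H : π → Type u} [∀ a, Ring (H a)] [∀ a, Algebra k (H a)]

namespace QuasiTuraevGCoalgebra
variable (T : QuasiTuraevGCoalgebra k H)
variable {a : π} {V : Type u} [AddCommGroup V] [Module k V]

/-- For an `α`-Yetter-Drinfeld module `V` and a left `H_λ`-module `X`, the map
`ĉ_{V,X} : ^αX ⊗ V → V ⊗ X`, `x ⊗ v ↦ v₍₀,₀₎ ⊗ v₍₁,λ₎ · x`. -/
noncomputable def ydBraidInv {l : π} {X : Type u} [AddCommGroup X] [Module k X]
    (coact : ∀ l : π, V →ₗ[k] V ⊗[k] H l) (ρX : H l →ₐ[k] Module.End k X) :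
    (X ⊗[k] V) →ₗ[k] (V ⊗[k] X) :=
  (LinearMap.lTensor V (aev ρX)) ∘ₗ
    (TensorProduct.assoc k V (H l) X).toLinearMap ∘ₗ
    (LinearMap.rTensor X (coact l)) ∘ₗ
    (TensorProduct.comm k X V).toLinearMap

/-- For an `α`-Yetter-Drinfeld module `V` and a left `H_λ`-module `X`, the map
`c_{V,X} : V ⊗ X → ^αX ⊗ V` given by
`v ⊗ x ↦ ^α[J¹₍₁,λ₎ y¹_λ S_{λ⁻¹}(J²_{λ⁻¹} y³_{λ⁻¹} (Ĩ²_α·v)₍₁,λ⁻¹₎ Ĩ¹_{λ⁻¹}) · x]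
⊗ J¹₍₂,α₎ y²_α · (Ĩ²_α·v)₍₀,₀₎`, where `Ĩ¹ ⊗ Ĩ² = I^L_{λ⁻¹,α}`,
`J¹ ⊗ J² = J^R_{λα,λ⁻¹}` and `y¹ ⊗ y² ⊗ y³ = Φ⁻¹_{λ,α,λ⁻¹}`. -/
noncomputable def ydBraid {l : π} {X : Type u} [AddCommGroup X] [Module k X]
    (ρV : H a →ₐ[k] Module.End k V) (coact : ∀ l : π, V →ₗ[k] V ⊗[k] H l)
    (ρX : H l →ₐ[k] Module.End k X) :
    (V ⊗[k] X) →ₗ[k] (X ⊗[k] V) :=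
  ((pparam (TensorProduct.leftComm k (H l) (H a) (H l⁻¹)).toLinearMap
      (ppost (TensorProduct.comm k V X).toLinearMap
        (pmapTens ρV.toLinearMap
          (ppost (aev ρX)
            (pleft X
              (pparam (TensorProduct.comm k (H l) (H l⁻¹)).toLinearMap
                (pcomp
                  (ppost (castL k H (inv_inv l) ∘ₗ (T.S l⁻¹).toLinearMap)
                    (LinearMap.mul k (H l⁻¹)))
                  (LinearMap.mul k (H l)))))))))
    (((TensorProduct.assoc k (H l) (H a) (H l⁻¹)).toLinearMap
        ((LinearMap.rTensor (H l⁻¹) (T.Δ l a).toLinearMap) (T.JR (l * a) l⁻¹))) *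
      T.Φinv l a l⁻¹)) ∘ₗ
  (TensorProduct.assoc k V (H l⁻¹) X).toLinearMap ∘ₗ
  (LinearMap.rTensor X
    ((pparam (TensorProduct.comm k (H l⁻¹) (H a)).toLinearMap
        (pcomp ((LinearMap.llcomp k V V (V ⊗[k] H l⁻¹) (coact l⁻¹)) ∘ₗ ρV.toLinearMap)
          (pright V ((LinearMap.mul k (H l⁻¹)).flip))))
      (T.IL l⁻¹ a)))

/-- The coaction of the conjugate Yetter-Drinfeld module `^βV`:
`ρ_{^βV,λ}(v) = v₍₀,₀₎ ⊗ φ_β(v₍₁,β⁻¹λβ₎)`. -/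
noncomputable def conjCoact (coact : ∀ l : π, V →ₗ[k] V ⊗[k] H l) (b : π) :
    ∀ l : π, V →ₗ[k] V ⊗[k] H l :=
  fun l =>
    (LinearMap.lTensor V
      (castL k H (by group : b * (b⁻¹ * l * b) * b⁻¹ = l) ∘ₗ
        (T.φ b (b⁻¹ * l * b)).toLinearMap)) ∘ₗ
    coact (b⁻¹ * l * b)

variable {b : π} {W : Type u} [AddCommGroup W] [Module k W]

/-- The coaction of the tensor product of an `α`-Yetter-Drinfeld module `V` and a
`β`-Yetter-Drinfeld module `W`:
`ρ_{V⊗W,λ}(v ⊗ w) = t¹_α Y¹_α · (y²_α·v)₍₀,₀₎ ⊗ t²_β · (Y³_β y³_β·w)₍₀,₀₎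
  ⊗ t³_λ (Y³_β y³_β·w)₍₁,λ₎ Y²_λ φ_{β⁻¹}((y²_α·v)₍₁,βλβ⁻¹₎) y¹_λ`
where `t = Φ⁻¹_{α,β,λ}`, `Y = Φ_{α,λ,β}` and `y = Φ⁻¹_{λ,α,β}`. -/
noncomputable def ydTensorCoact (ρV : H a →ₐ[k] Module.End k V)
    (coactV : ∀ l : π, V →ₗ[k] V ⊗[k] H l)
    (ρW : H b →ₐ[k] Module.End k W)
    (coactW : ∀ l : π, W →ₗ[k] W ⊗[k] H l) (l : π) :
    (V ⊗[k] W) →ₗ[k] (V ⊗[k] W) ⊗[k] H l :=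
  (TensorProduct.assoc k V W (H l)).symm.toLinearMap ∘ₗ
  -- stage `t = Φ⁻¹_{α,β,λ}` : `t¹` acts on `V`, `t²` acts on `W`, `t³` multiplies on the left
  ((pmapTens ρV.toLinearMap (pmapTens ρW.toLinearMap (LinearMap.mul k (H l))))
    (T.Φinv a b l)) ∘ₗ
  -- stage `Y = Φ_{α,λ,β}` : `Y¹` acts on `V`; `Y²` multiplies on the left; then `Y³` acts
  -- on `W`, the coaction `ρ_{W,λ}` is applied, and `(…·w)₍₁,λ₎` multiplies on the left
  ((pmapTens ρV.toLinearMap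
      (pcomp (pright W (LinearMap.mul k (H l)))
        (ppost
          ((LinearMap.lTensor W (LinearMap.mul' k (H l))) ∘ₗ
            (TensorProduct.assoc k W (H l) (H l)).toLinearMap)
          (pleft (H l)
            ((LinearMap.llcomp k W W (W ⊗[k] H l) (coactW l)) ∘ₗ ρW.toLinearMap)))))
    (T.Φ a l b)) ∘ₗ
  -- stage `y = Φ⁻¹_{λ,α,β}` : `y²` acts on `V` followed by `ρ_{V,βλβ⁻¹}`, whose second leg
  -- is pushed through `φ_{β⁻¹}` and multiplied on the left of `y¹`; `y³` acts on `W`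
  ((pparam
      ((LinearMap.lTensor (H a) (TensorProduct.comm k (H l) (H b)).toLinearMap) ∘ₗ
        (TensorProduct.leftComm k (H l) (H a) (H b)).toLinearMap)
      (ppost
        ((LinearMap.lTensor V (LinearMap.lTensor W (LinearMap.mul' k (H l)))) ∘ₗ
          (LinearMap.lTensor V (TensorProduct.leftComm k (H l) W (H l)).toLinearMap) ∘ₗ
          (TensorProduct.assoc k V (H l) (W ⊗[k] H l)).toLinearMap ∘ₗ
          (LinearMap.rTensor (W ⊗[k] H l)
            (LinearMap.lTensor V
              (castL k H (by group : b⁻¹ * (b * l * b⁻¹) * b⁻¹⁻¹ = l) ∘ₗ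
                (T.φ b⁻¹ (b * l * b⁻¹)).toLinearMap))))
        (pmapTens
          ((LinearMap.llcomp k V V (V ⊗[k] H (b * l * b⁻¹)) (coactV (b * l * b⁻¹))) ∘ₗ
            ρV.toLinearMap)
          (ppre (TensorProduct.rid k W).symm.toLinearMap
            (pmapTens ρW.toLinearMap
              ((LinearMap.ringLmapEquivSelf k k (H l)).symm.toLinearMap))))))
    (T.Φinv l a b))

end QuasiTuraevGCoalgebra
end Braid

section HB
variable {k : Type u} [Field k] {π : Type v} [Group π]
variable {H : π → Type u} [∀ a, Ring (H a)] [∀ a, Algebra k (H a)]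
variable (T : QuasiTuraevGCoalgebra k H)

open QuasiTuraevGCoalgebra

/-- A half-braiding on a left `H_α`-module `V`: a natural family of `H_{αλ}`-linear
isomorphisms `c_{V,X} : V ⊗ X → ^αX ⊗ V` satisfying the hexagon identity. A pair
`(V, c_{V,-})` is an object of the `α`-th component `Z_α(Rep(H))` of the center of
`Rep(H)`. -/
structure HalfBraiding (a : π) (V : Type u) [AddCommGroup V] [Module k V]
    (ρV : H a →ₐ[k] Module.End k V) where
  /-- the underlying `k`-linear isomorphisms `c_{V,X}` -/
  braid : ∀ (l : π) (X : Type u) [AddCommGroup X] [Module k X]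
    (ρX : H l →ₐ[k] Module.End k X), (V ⊗[k] X) ≃ₗ[k] (X ⊗[k] V)
  /-- `c_{V,X}` is `H_{αλ}`-linear -/
  hlinear : ∀ (l : π) (X : Type u) [AddCommGroup X] [Module k X]
    (ρX : H l →ₐ[k] Module.End k X) (h : H (a * l)) (t : V ⊗[k] X),
    braid l X ρX ((T.tensAlg ρV ρX h) t)
      = (T.tensAlg (T.conjAlg ρX a) ρV
          (castA k H (by group : a * l = a * l * a⁻¹ * a) h)) (braid l X ρX t)
  /-- `c_{V,-}` is natural -/
  hnatural : ∀ (l : π) (X X' : Type u) [AddCommGroup X] [Module k X]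
    [AddCommGroup X'] [Module k X']
    (ρX : H l →ₐ[k] Module.End k X) (ρX' : H l →ₐ[k] Module.End k X')
    (g : X →ₗ[k] X'), (∀ (h : H l) (x : X), g (ρX h x) = ρX' h (g x)) →
    ∀ t : V ⊗[k] X,
      braid l X' ρX' ((LinearMap.lTensor V g) t)
        = (LinearMap.rTensor V g) (braid l X ρX t)
  /-- the hexagon identity
  `c_{V,X₁⊗X₂} = a⁻¹_{^αX₁,^αX₂,V} ∘ (id ⊗ c_{V,X₂}) ∘ a_{^αX₁,V,X₂} ∘ (c_{V,X₁} ⊗ id) ∘ a⁻¹_{V,X₁,X₂}` -/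
  hhexagon : ∀ (l₁ l₂ : π) (X₁ X₂ : Type u) [AddCommGroup X₁] [Module k X₁]
    [AddCommGroup X₂] [Module k X₂]
    (ρ₁ : H l₁ →ₐ[k] Module.End k X₁) (ρ₂ : H l₂ →ₐ[k] Module.End k X₂),
    (braid (l₁ * l₂) (X₁ ⊗[k] X₂) (T.tensAlg ρ₁ ρ₂)).toLinearMap
      = T.assocModInv (T.conjAlg ρ₁ a) (T.conjAlg ρ₂ a) ρV ∘ₗ
        LinearMap.lTensor X₁ (braid l₂ X₂ ρ₂).toLinearMap ∘ₗ
        T.assocMod (T.conjAlg ρ₁ a) ρV ρ₂ ∘ₗ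
        LinearMap.rTensor X₂ (braid l₁ X₁ ρ₁).toLinearMap ∘ₗ
        T.assocModInv ρV ρ₁ ρ₂

end HB

section HB2
variable {k : Type u} [Field k] {π : Type v} [Group π]
variable {H : π → Type u} [∀ a, Ring (H a)] [∀ a, Algebra k (H a)]
variable {T : QuasiTuraevGCoalgebra k H}

/-- The coaction induced by a half-braiding: `ρ_{V,λ}(v) = c⁻¹_{V,H_λ}(^α1_λ ⊗ v)`. -/
noncomputable def HalfBraiding.coactOf {a : π} {V : Type u} [AddCommGroup V] [Module k V]
    {ρV : H a →ₐ[k] Module.End k V} (hb : HalfBraiding T a V ρV) :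
    ∀ l : π, V →ₗ[k] V ⊗[k] H l :=
  fun l =>
    (hb.braid l (H l) (Algebra.lmul k (H l))).symm.toLinearMap ∘ₗ
      TensorProduct.mk k (H l) V 1

end HB2

/-!
Read an element `v ⊗ (b ⊗ c)` of `V ⊗ (H_{λ₁} ⊗ H_{λ₂})` as the map
`x₁ ⊗ x₂ ↦ v ⊗ (b·x₁ ⊗ c·x₂)` (`evalLegs`). Both sides of the hexagon then factor through
`evalLegs`: the left side after `(id ⊗ Δ_{λ₁,λ₂}) ∘ ρ_{V,λ₁λ₂}`, the right side after the composite
of five operators on `V ⊗ (H_{λ₁} ⊗ H_{λ₂})` coming from `Φ_{λ₁,λ₂,α}`, `ρ_{V,λ₂}`,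
`Φ⁻¹_{λ₁,α,λ₂}`, `ρ_{V,λ₁}` and `Φ_{α,λ₁,λ₂}`. The crossing only enters through the invariance of
`Φ`, which turns the associators of the conjugate modules `^αXᵢ` into those of the `Xᵢ`.
The three middle operators produce exactly the left side of the quasi-coassociativity axiom of
`V`. Its right side is `Φ⁻¹_{α,λ₁,λ₂}` acting after `(id ⊗ Δ) ∘ ρ_{V,λ₁λ₂}`, sandwiched by
`Φ⁻¹_{λ₁,λ₂,α}`; since all these operators commute with right multiplication on the legs, the
outer `Φ`'s cancel against these `Φ⁻¹`'s.
-/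

section ParamMaps
variable {k : Type u} [Field k]
variable {A A' B B' M N M' N' P : Type u}
variable [AddCommGroup A] [Module k A] [AddCommGroup A'] [Module k A']
variable [AddCommGroup B] [Module k B] [AddCommGroup B'] [Module k B']
variable [AddCommGroup M] [Module k M] [AddCommGroup N] [Module k N]
variable [AddCommGroup M'] [Module k M'] [AddCommGroup N'] [Module k N']
variable [AddCommGroup P] [Module k P]

lemma TensorProduct.induction_on₃ {motive : A ⊗[k] (B ⊗[k] M) → Prop} (z : A ⊗[k] (B ⊗[k] M))
    (zero : motive 0) (tmul : ∀ x y w, motive (x ⊗ₜ[k] (y ⊗ₜ[k] w)))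
    (add : ∀ s t, motive s → motive t → motive (s + t)) : motive z := by
  induction z using TensorProduct.induction_on with
  | zero => exact zero
  | add s t hs ht => exact add s t hs ht
  | tmul x y =>
    induction y using TensorProduct.induction_on with
    | zero => simpa using zero
    | add s t hs ht => simpa [TensorProduct.tmul_add] using add _ _ hs ht
    | tmul y w => exact tmul x y w

@[simp] lemma pmapTens_tmul (f : A →ₗ[k] M →ₗ[k] N) (g : B →ₗ[k] M' →ₗ[k] N') (x : A) (y : B) :
    pmapTens f g (x ⊗ₜ[k] y) = TensorProduct.map (f x) (g y) := by
  simp [pmapTens, TensorProduct.homTensorHomMap]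

@[simp] lemma pcomp_tmul (f : A →ₗ[k] M →ₗ[k] N) (g : B →ₗ[k] N →ₗ[k] P) (x : A) (y : B) :
    pcomp f g (x ⊗ₜ[k] y) = g y ∘ₗ f x := by
  simp only [pcomp, TensorProduct.lift.tmul, LinearMap.coe_comp, Function.comp_apply,
    LinearMap.lcomp_apply, LinearMap.flip_apply]
  rfl

@[simp] lemma pparam_apply (σ : B →ₗ[k] A) (f : A →ₗ[k] M →ₗ[k] N) (x : B) :
    pparam σ f x = f (σ x) := rfl

@[simp] lemma pright_apply (f : A →ₗ[k] M →ₗ[k] N) (x : A) :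
    pright P f x = LinearMap.lTensor P (f x) := rfl

lemma pmapTens_comp_map (f : A →ₗ[k] M →ₗ[k] N) (σ : A' →ₗ[k] A)
    (g : B →ₗ[k] M' →ₗ[k] N') (τ : B' →ₗ[k] B) :
    pmapTens (f ∘ₗ σ) (g ∘ₗ τ) = pmapTens f g ∘ₗ TensorProduct.map σ τ := by
  rw [pmapTens, pmapTens, TensorProduct.map_comp, LinearMap.comp_assoc]

end ParamMaps

section Casts
variable {k : Type u} [Field k] {π : Type v}
variable {H : π → Type u} [∀ a, Ring (H a)] [∀ a, Algebra k (H a)]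

lemma castL_castL {a b c : π} (e : a = b) (e' : b = c) (x : H a) :
    castL k H e' (castL k H e x) = castL k H (e.trans e') x := by
  subst e e'; rfl

lemma castL_self {a : π} (e : a = a) : castL k H e = LinearMap.id := rfl

lemma castA_toLinearMap {a b : π} (e : a = b) : (castA k H e).toLinearMap = castL k H e := by
  subst e; rfl

end Casts

lemma QuasiHopfGCoalgebra.map_castL_Φ {k : Type u} [Field k] {π : Type v} [Group π]
    {H : π → Type u} [∀ a, Ring (H a)] [∀ a, Algebra k (H a)] (T : QuasiHopfGCoalgebra k H)
    {a b c a' b' c' : π} (ea : a = a') (eb : b = b') (ec : c = c') :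
    TensorProduct.map (castL k H ea) (TensorProduct.map (castL k H eb) (castL k H ec))
      (T.Φ a b c) = T.Φ a' b' c' := by
  subst ea eb ec
  simp [castL]

namespace QuasiTuraevGCoalgebra

section Crossing
variable {k : Type u} [Field k] {π : Type v} [Group π]
variable {H : π → Type u} [∀ a, Ring (H a)] [∀ a, Algebra k (H a)]
variable (T : QuasiTuraevGCoalgebra k H)

lemma castL_φ {b b' c c' : π} (eb : b = b') (ec : c = c') (e : b * c * b⁻¹ = b' * c' * b'⁻¹)
    (h : H c) : castL k H e (T.φ b c h) = T.φ b' c' (castL k H ec h) := by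
  subst eb ec; rfl

lemma castL_φ_one (c : π) (e : 1 * c * 1⁻¹ = c) (h : H c) : castL k H e (T.φ 1 c h) = h := by
  apply (T.φ 1 c).injective
  calc T.φ 1 c (castL k H e (T.φ 1 c h))
      = castL k H (by group) (T.φ 1 (1 * c * 1⁻¹) (T.φ 1 c h)) := (castL_φ T rfl e _ _).symm
    _ = castL k H (by group : 1 * 1 * c * (1 * 1)⁻¹ = 1 * c * 1⁻¹)
          (castL k H (by group) (T.φ 1 (1 * c * 1⁻¹) (T.φ 1 c h))) := (castL_castL _ _ _).symm
    _ = castL k H (by group) (T.φ (1 * 1) c h) := by rw [T.φ_mul]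
    _ = T.φ 1 c h := castL_φ T (mul_one 1) rfl _ h

lemma castL_φ_inv_φ (a c : π) (e : a⁻¹ * (a * c * a⁻¹) * a⁻¹⁻¹ = c) (h : H c) :
    castL k H e (T.φ a⁻¹ (a * c * a⁻¹) (T.φ a c h)) = h :=
  calc castL k H e (T.φ a⁻¹ (a * c * a⁻¹) (T.φ a c h))
      = castL k H (by group : a⁻¹ * a * c * (a⁻¹ * a)⁻¹ = c)
          (castL k H (by group) (T.φ a⁻¹ (a * c * a⁻¹) (T.φ a c h))) :=
        (castL_castL _ _ _).symm
    _ = castL k H (by group) (T.φ (a⁻¹ * a) c h) := by rw [T.φ_mul]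
    _ = castL k H (by group : 1 * c * 1⁻¹ = c)
          (castL k H (by group) (T.φ (a⁻¹ * a) c h)) := (castL_castL _ _ _).symm
    _ = h := by rw [castL_φ T (inv_mul_cancel a) rfl]; exact castL_φ_one T c _ h

lemma castL_comp_φ_one (c : π) (e : 1 * c * 1⁻¹ = c) :
    castL k H e ∘ₗ (T.φ 1 c).toLinearMap = LinearMap.id :=
  LinearMap.ext (castL_φ_one T c e)

noncomputable def unconj (a c : π) : H (a * c * a⁻¹) →ₐ[k] H c :=
  (castA k H (by group : a⁻¹ * (a * c * a⁻¹) * a⁻¹⁻¹ = c)).comp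
    (T.φ a⁻¹ (a * c * a⁻¹)).toAlgHom

lemma conjAlg_eq_comp_unconj {l : π} {X : Type u} [AddCommGroup X] [Module k X]
    (ρ : H l →ₐ[k] Module.End k X) (a : π) : T.conjAlg ρ a = ρ.comp (T.unconj a l) := rfl

lemma unconj_comp_φ (a c : π) :
    (T.unconj a c).toLinearMap ∘ₗ (T.φ a c).toLinearMap = LinearMap.id := by
  ext h
  simp only [unconj, LinearMap.comp_apply, AlgHom.comp_toLinearMap, castA_toLinearMap]
  exact castL_φ_inv_φ T a c _ h

lemma map_unconj_Φ (a l₁ l₂ : π) :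
    TensorProduct.map (T.unconj a l₁).toLinearMap
        (TensorProduct.map (T.unconj a l₂).toLinearMap LinearMap.id)
        (T.Φ (a * l₁ * a⁻¹) (a * l₂ * a⁻¹) a) = T.Φ l₁ l₂ a := by
  rw [← T.map_castL_Φ rfl rfl (by group : 1 * a * 1⁻¹ = a), ← T.φ_Φ a a 1]
  simp only [← LinearMap.comp_apply, ← TensorProduct.map_comp, castL_self, LinearMap.id_comp,
    LinearMap.comp_id, unconj_comp_φ, castL_comp_φ_one, TensorProduct.map_id, LinearMap.id_apply]

lemma map_unconj_Φ_left (a l₁ l₂ : π) :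
    TensorProduct.map (T.unconj a l₁).toLinearMap LinearMap.id (T.Φ (a * l₁ * a⁻¹) a l₂)
      = T.Φ l₁ a l₂ := by
  rw [← T.map_castL_Φ rfl (by group : 1 * a * 1⁻¹ = a) (by group : 1 * l₂ * 1⁻¹ = l₂),
    ← T.φ_Φ a 1 1]
  simp only [← LinearMap.comp_apply, ← TensorProduct.map_comp, castL_self, LinearMap.id_comp,
    LinearMap.comp_id, unconj_comp_φ, castL_comp_φ_one, TensorProduct.map_id, LinearMap.id_apply]

lemma map_unconj_Φinv_left (a l₁ l₂ : π) :
    TensorProduct.map (T.unconj a l₁).toLinearMap LinearMap.id (T.Φinv (a * l₁ * a⁻¹) a l₂)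
      = T.Φinv l₁ a l₂ := by
  let Θ := Algebra.TensorProduct.map (T.unconj a l₁) (AlgHom.id k (H a ⊗[k] H l₂))
  have hΘ (x) : Θ x = TensorProduct.map (T.unconj a l₁).toLinearMap LinearMap.id x := rfl
  rw [← hΘ]
  refine left_inv_eq_right_inv (a := T.Φ l₁ a l₂) ?_ (T.Φ_mul_Φinv l₁ a l₂)
  rw [← map_unconj_Φ_left, ← hΘ, ← map_mul, T.Φinv_mul_Φ, map_one]

end Crossing

section Legs
variable {k : Type u} [Field k] {π : Type v}
variable {H : π → Type u} [∀ a, Ring (H a)] [∀ a, Algebra k (H a)]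
variable {a : π} {V : Type u} [AddCommGroup V] [Module k V]
variable (ρV : H a →ₐ[k] Module.End k V) (coact : ∀ l : π, V →ₗ[k] V ⊗[k] H l) (l₁ l₂ : π)

noncomputable def legAct :
    (H a ⊗[k] (H l₁ ⊗[k] H l₂)) →ₗ[k] Module.End k (V ⊗[k] (H l₁ ⊗[k] H l₂)) :=
  pmapTens ρV.toLinearMap
    (pmapTens (Algebra.lmul k (H l₁)).toLinearMap (Algebra.lmul k (H l₂)).toLinearMap)

@[simp] lemma legAct_tmul (x : H a) (y₁ : H l₁) (y₂ : H l₂) (v : V) (b : H l₁) (c : H l₂) :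
    legAct ρV l₁ l₂ (x ⊗ₜ[k] (y₁ ⊗ₜ[k] y₂)) (v ⊗ₜ[k] (b ⊗ₜ[k] c))
      = ρV x v ⊗ₜ[k] ((y₁ * b) ⊗ₜ[k] (y₂ * c)) := by
  simp [legAct]

lemma legAct_eq_algHom :
    legAct ρV l₁ l₂ = ((Module.endTensorEndAlgHom (R := k) (S := k) (A := k)).comp
      (Algebra.TensorProduct.map ρV ((Module.endTensorEndAlgHom (R := k) (S := k) (A := k)).comp
        (Algebra.TensorProduct.map (Algebra.lmul k (H l₁))
          (Algebra.lmul k (H l₂)))))).toLinearMap := by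
  ext x y₁ y₂ v b c
  simp [Module.endTensorEndAlgHom_apply]

lemma legAct_mul (u u' : H a ⊗[k] (H l₁ ⊗[k] H l₂)) :
    legAct ρV l₁ l₂ (u * u') = legAct ρV l₁ l₂ u ∘ₗ legAct ρV l₁ l₂ u' := by
  rw [legAct_eq_algHom, AlgHom.toLinearMap_apply, map_mul]
  rfl

lemma legAct_one : legAct ρV l₁ l₂ 1 = LinearMap.id := by
  rw [legAct_eq_algHom, AlgHom.toLinearMap_apply, map_one]
  rfl

noncomputable def legActMid :
    (H l₁ ⊗[k] (H a ⊗[k] H l₂)) →ₗ[k] Module.End k (V ⊗[k] (H l₁ ⊗[k] H l₂)) :=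
  pparam (TensorProduct.leftComm k (H l₁) (H a) (H l₂)).toLinearMap (legAct ρV l₁ l₂)

@[simp] lemma legActMid_tmul (y₁ : H l₁) (y₂ : H a) (y₃ : H l₂) (v : V) (b : H l₁) (c : H l₂) :
    legActMid ρV l₁ l₂ (y₁ ⊗ₜ[k] (y₂ ⊗ₜ[k] y₃)) (v ⊗ₜ[k] (b ⊗ₜ[k] c))
      = ρV y₂ v ⊗ₜ[k] ((y₁ * b) ⊗ₜ[k] (y₃ * c)) := by
  simp [legActMid, TensorProduct.leftComm]

variable (V) in
noncomputable def legMulRight :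
    (H l₁ ⊗[k] H l₂) →ₗ[k] Module.End k (V ⊗[k] (H l₁ ⊗[k] H l₂)) :=
  pright V (pmapTens ((LinearMap.mul k (H l₁)).flip) ((LinearMap.mul k (H l₂)).flip))

@[simp] lemma legMulRight_tmul (w₁ : H l₁) (w₂ : H l₂) (v : V) (b : H l₁) (c : H l₂) :
    legMulRight V l₁ l₂ (w₁ ⊗ₜ[k] w₂) (v ⊗ₜ[k] (b ⊗ₜ[k] c))
      = v ⊗ₜ[k] ((b * w₁) ⊗ₜ[k] (c * w₂)) := by
  simp [legMulRight]

lemma legMulRight_one : legMulRight V l₁ l₂ (1 : H l₁ ⊗[k] H l₂) = LinearMap.id := by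
  ext v b c
  simp [Algebra.TensorProduct.one_def]

lemma legMulRight_tmul_comp_tmul (w₁ z₁ : H l₁) (w₂ z₂ : H l₂) :
    legMulRight V l₁ l₂ (w₁ ⊗ₜ[k] w₂) ∘ₗ legMulRight V l₁ l₂ (z₁ ⊗ₜ[k] z₂)
      = legMulRight V l₁ l₂ ((z₁ * w₁) ⊗ₜ[k] (z₂ * w₂)) := by
  ext v b c
  simp [mul_assoc]

def CommutesWithLegMulRight (f : Module.End k (V ⊗[k] (H l₁ ⊗[k] H l₂))) : Prop :=
  ∀ w, f ∘ₗ legMulRight V l₁ l₂ w = legMulRight V l₁ l₂ w ∘ₗ f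

lemma commutesWithLegMulRight_of_tmul {f : Module.End k (V ⊗[k] (H l₁ ⊗[k] H l₂))}
    (hf : ∀ (w₁ : H l₁) (w₂ : H l₂) (v : V) (b : H l₁) (c : H l₂),
      f (v ⊗ₜ[k] ((b * w₁) ⊗ₜ[k] (c * w₂)))
        = legMulRight V l₁ l₂ (w₁ ⊗ₜ[k] w₂) (f (v ⊗ₜ[k] (b ⊗ₜ[k] c)))) :
    CommutesWithLegMulRight l₁ l₂ f := by
  intro w
  induction w using TensorProduct.induction_on with
  | zero => simp
  | add s t hs ht => simp only [map_add, LinearMap.comp_add, LinearMap.add_comp, hs, ht]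
  | tmul w₁ w₂ =>
    ext v b c
    simpa using hf w₁ w₂ v b c

lemma legAct_commutes (u : H a ⊗[k] (H l₁ ⊗[k] H l₂)) :
    CommutesWithLegMulRight l₁ l₂ (legAct ρV l₁ l₂ u) := by
  induction u using TensorProduct.induction_on₃ with
  | zero => intro w; simp
  | add s t hs ht =>
    intro w
    simp only [map_add, LinearMap.comp_add, LinearMap.add_comp, hs w, ht w]
  | tmul x y₁ y₂ =>
    exact commutesWithLegMulRight_of_tmul l₁ l₂ fun w₁ w₂ v b c => by simp [mul_assoc]

lemma legActMid_commutes (y : H l₁ ⊗[k] (H a ⊗[k] H l₂)) :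
    CommutesWithLegMulRight l₁ l₂ (legActMid ρV l₁ l₂ y) :=
  legAct_commutes ρV l₁ l₂ _

noncomputable def coactFst : Module.End k (V ⊗[k] (H l₁ ⊗[k] H l₂)) :=
  LinearMap.lTensor V
      ((LinearMap.rTensor (H l₂) (LinearMap.mul' k (H l₁))) ∘ₗ
        (TensorProduct.assoc k (H l₁) (H l₁) (H l₂)).symm.toLinearMap) ∘ₗ
    (TensorProduct.assoc k V (H l₁) (H l₁ ⊗[k] H l₂)).toLinearMap ∘ₗ
    LinearMap.rTensor (H l₁ ⊗[k] H l₂) (coact l₁)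

noncomputable def coactSnd : Module.End k (V ⊗[k] (H l₁ ⊗[k] H l₂)) :=
  LinearMap.lTensor V
      ((LinearMap.lTensor (H l₁) (LinearMap.mul' k (H l₂))) ∘ₗ
        (TensorProduct.leftComm k (H l₂) (H l₁) (H l₂)).toLinearMap) ∘ₗ
    (TensorProduct.assoc k V (H l₂) (H l₁ ⊗[k] H l₂)).toLinearMap ∘ₗ
    LinearMap.rTensor (H l₁ ⊗[k] H l₂) (coact l₂)

lemma coactFst_commutes : CommutesWithLegMulRight l₁ l₂ (coactFst coact l₁ l₂) := by
  refine commutesWithLegMulRight_of_tmul l₁ l₂ fun w₁ w₂ v b c => ?_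
  simp only [coactFst, LinearMap.comp_apply, LinearMap.rTensor_tmul]
  induction coact l₁ v using TensorProduct.induction_on with
  | zero => simp
  | add s t hs ht => simp only [TensorProduct.add_tmul, map_add, hs, ht]
  | tmul v' w => simp [mul_assoc]

lemma coactSnd_commutes : CommutesWithLegMulRight l₁ l₂ (coactSnd coact l₁ l₂) := by
  refine commutesWithLegMulRight_of_tmul l₁ l₂ fun w₁ w₂ v b c => ?_
  simp only [coactSnd, LinearMap.comp_apply, LinearMap.rTensor_tmul]
  induction coact l₂ v using TensorProduct.induction_on with
  | zero => simp
  | add s t hs ht => simp only [TensorProduct.add_tmul, map_add, hs, ht]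
  | tmul v' w => simp [TensorProduct.leftComm, mul_assoc]

noncomputable def tensorRotate :
    (H l₁ ⊗[k] (H l₂ ⊗[k] H a)) →ₗ[k] (H a ⊗[k] (H l₁ ⊗[k] H l₂)) :=
  (LinearMap.lTensor (H a) (TensorProduct.comm k (H l₂) (H l₁)).toLinearMap) ∘ₗ
    (TensorProduct.leftComm k (H l₂) (H a) (H l₁)).toLinearMap ∘ₗ
    (TensorProduct.assoc k (H l₂) (H a) (H l₁)).toLinearMap ∘ₗ
    (TensorProduct.comm k (H l₁) (H l₂ ⊗[k] H a)).toLinearMap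

noncomputable def sandwich (m : V →ₗ[k] V ⊗[k] (H l₁ ⊗[k] H l₂)) :
    (H l₁ ⊗[k] (H l₂ ⊗[k] H a)) →ₗ[k] (V →ₗ[k] V ⊗[k] (H l₁ ⊗[k] H l₂)) :=
  pcomp ((LinearMap.llcomp k V V (V ⊗[k] (H l₁ ⊗[k] H l₂)) m) ∘ₗ ρV.toLinearMap)
    (legMulRight V l₁ l₂) ∘ₗ tensorRotate l₁ l₂

@[simp] lemma sandwich_tmul (m : V →ₗ[k] V ⊗[k] (H l₁ ⊗[k] H l₂))
    (x : H l₁) (y : H l₂) (z : H a) :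
    sandwich ρV l₁ l₂ m (x ⊗ₜ[k] (y ⊗ₜ[k] z)) = legMulRight V l₁ l₂ (x ⊗ₜ[k] y) ∘ₗ m ∘ₗ ρV z := by
  simp only [sandwich, tensorRotate, TensorProduct.leftComm, LinearEquiv.comp_coe,
    LinearMap.coe_comp, LinearEquiv.coe_coe, Function.comp_apply, LinearEquiv.trans_apply,
    TensorProduct.comm_tmul, TensorProduct.assoc_tmul, TensorProduct.assoc_symm_tmul,
    TensorProduct.congr_tmul, LinearEquiv.coe_one, id_eq, LinearMap.lTensor_tmul, pcomp_tmul,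
    AlgHom.coe_toLinearMap]
  rfl

lemma sandwich_one (m : V →ₗ[k] V ⊗[k] (H l₁ ⊗[k] H l₂)) : sandwich ρV l₁ l₂ m 1 = m := by
  rw [Algebra.TensorProduct.one_def, Algebra.TensorProduct.one_def, sandwich_tmul,
    ← Algebra.TensorProduct.one_def, legMulRight_one, map_one]
  rfl

lemma comp_sandwich {f : Module.End k (V ⊗[k] (H l₁ ⊗[k] H l₂))}
    (hf : CommutesWithLegMulRight l₁ l₂ f) (m : V →ₗ[k] V ⊗[k] (H l₁ ⊗[k] H l₂))
    (u : H l₁ ⊗[k] (H l₂ ⊗[k] H a)) :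
    f ∘ₗ sandwich ρV l₁ l₂ m u = sandwich ρV l₁ l₂ (f ∘ₗ m) u := by
  induction u using TensorProduct.induction_on₃ with
  | zero => simp
  | add s t hs ht => simp only [map_add, LinearMap.comp_add, hs, ht]
  | tmul x y z =>
    rw [sandwich_tmul, sandwich_tmul, ← LinearMap.comp_assoc, hf]
    simp only [LinearMap.comp_assoc]

lemma sandwich_sandwich (m : V →ₗ[k] V ⊗[k] (H l₁ ⊗[k] H l₂))
    (z u : H l₁ ⊗[k] (H l₂ ⊗[k] H a)) :
    sandwich ρV l₁ l₂ (sandwich ρV l₁ l₂ m z) u = sandwich ρV l₁ l₂ m (z * u) := by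
  induction u using TensorProduct.induction_on₃ with
  | zero => simp
  | add s t hs ht => simp only [map_add, mul_add, hs, ht]
  | tmul u₁ u₂ u₃ =>
    rw [sandwich_tmul]
    induction z using TensorProduct.induction_on₃ with
    | zero => simp
    | add s t hs ht =>
      simp only [map_add, LinearMap.add_comp, LinearMap.comp_add, add_mul, hs, ht]
    | tmul z₁ z₂ z₃ =>
      simp only [Algebra.TensorProduct.tmul_mul_tmul, sandwich_tmul, map_mul,
        ← LinearMap.comp_assoc, legMulRight_tmul_comp_tmul]
      rfl

section Eval
variable {l₁ l₂ : π} {X₁ X₂ : Type u} [AddCommGroup X₁] [Module k X₁] [AddCommGroup X₂]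
  [Module k X₂] (ρ₁ : H l₁ →ₐ[k] Module.End k X₁) (ρ₂ : H l₂ →ₐ[k] Module.End k X₂)

noncomputable def evalLegs :
    ((V ⊗[k] (H l₁ ⊗[k] H l₂)) ⊗[k] (X₁ ⊗[k] X₂)) →ₗ[k] (V ⊗[k] (X₁ ⊗[k] X₂)) :=
  LinearMap.lTensor V
      (TensorProduct.map (aev ρ₁) (aev ρ₂) ∘ₗ
        (TensorProduct.tensorTensorTensorComm k (H l₁) (H l₂) X₁ X₂).toLinearMap) ∘ₗ
    (TensorProduct.assoc k V (H l₁ ⊗[k] H l₂) (X₁ ⊗[k] X₂)).toLinearMap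

@[simp] lemma evalLegs_tmul (v : V) (b : H l₁) (c : H l₂) (x₁ : X₁) (x₂ : X₂) :
    evalLegs ρ₁ ρ₂ ((v ⊗ₜ[k] (b ⊗ₜ[k] c)) ⊗ₜ[k] (x₁ ⊗ₜ[k] x₂))
      = v ⊗ₜ[k] (ρ₁ b x₁ ⊗ₜ[k] ρ₂ c x₂) := by
  simp [evalLegs, aev]

variable {W : Type*} [AddCommGroup W] [Module k W]
  (g : W →ₗ[k] (V ⊗[k] (H l₁ ⊗[k] H l₂)) ⊗[k] (X₁ ⊗[k] X₂))

lemma lTensor_ydBraidInv_comp_evalLegs :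
    LinearMap.lTensor X₁ (ydBraidInv coact ρ₂) ∘ₗ
        ((TensorProduct.comm k V (X₁ ⊗[k] X₂)).trans
          (TensorProduct.assoc k X₁ X₂ V)).toLinearMap ∘ₗ evalLegs ρ₁ ρ₂ ∘ₗ g
      = (TensorProduct.leftComm k V X₁ X₂).toLinearMap ∘ₗ evalLegs ρ₁ ρ₂ ∘ₗ
          LinearMap.rTensor (X₁ ⊗[k] X₂) (coactSnd coact l₁ l₂) ∘ₗ g := by
  simp only [← LinearMap.comp_assoc]
  congr 1
  ext v b c x₁ x₂
  simp only [LinearMap.comp_apply, TensorProduct.AlgebraTensorModule.curry_apply,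
    TensorProduct.curry_apply, LinearMap.coe_restrictScalars, LinearEquiv.coe_coe,
    LinearMap.rTensor_tmul, evalLegs_tmul, coactSnd, LinearEquiv.trans_apply,
    TensorProduct.comm_tmul, TensorProduct.assoc_tmul, LinearMap.lTensor_tmul, ydBraidInv]
  induction coact l₂ v using TensorProduct.induction_on with
  | zero => simp
  | add s t hs ht => simp only [map_add, TensorProduct.add_tmul, TensorProduct.tmul_add, hs, ht]
  | tmul v' w => simp [aev, TensorProduct.leftComm]

lemma rTensor_ydBraidInv_comp_evalLegs :
    LinearMap.rTensor X₂ (ydBraidInv coact ρ₁) ∘ₗ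
        ((TensorProduct.leftComm k V X₁ X₂).trans
          (TensorProduct.assoc k X₁ V X₂).symm).toLinearMap ∘ₗ evalLegs ρ₁ ρ₂ ∘ₗ g
      = (TensorProduct.assoc k V X₁ X₂).symm.toLinearMap ∘ₗ evalLegs ρ₁ ρ₂ ∘ₗ
          LinearMap.rTensor (X₁ ⊗[k] X₂) (coactFst coact l₁ l₂) ∘ₗ g := by
  simp only [← LinearMap.comp_assoc]
  congr 1
  ext v b c x₁ x₂
  simp only [LinearMap.comp_apply, TensorProduct.AlgebraTensorModule.curry_apply,
    TensorProduct.curry_apply, LinearMap.coe_restrictScalars, LinearEquiv.coe_coe,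
    LinearMap.rTensor_tmul, evalLegs_tmul, coactFst, LinearEquiv.trans_apply, ydBraidInv,
    TensorProduct.leftComm_tmul, TensorProduct.assoc_symm_tmul, TensorProduct.comm_tmul]
  induction coact l₁ v using TensorProduct.induction_on with
  | zero => simp
  | add s t hs ht => simp only [map_add, TensorProduct.add_tmul, hs, ht]
  | tmul v' w => simp [aev]

end Eval

end Legs

section Hexagon
variable {k : Type u} [Field k] {π : Type v} [Group π]
variable {H : π → Type u} [∀ a, Ring (H a)] [∀ a, Algebra k (H a)]
variable (T : QuasiTuraevGCoalgebra k H)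
variable {a : π} {V : Type u} [AddCommGroup V] [Module k V]
variable (ρV : H a →ₐ[k] Module.End k V) (coact : ∀ l : π, V →ₗ[k] V ⊗[k] H l)

section Coassoc
variable (l₁ l₂ : π)

lemma ydCoassocLHS_eq :
    ydCoassocLHS T ρV coact l₁ l₂
      = coactFst coact l₁ l₂ ∘ₗ legActMid ρV l₁ l₂ (T.Φinv l₁ a l₂) ∘ₗ coactSnd coact l₁ l₂ ∘ₗ
          (TensorProduct.mk k V (H l₁ ⊗[k] H l₂)).flip 1 := by
  ext v
  simp only [ydCoassocLHS, LinearMap.comp_apply, pparam_apply, LinearMap.flip_apply,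
    TensorProduct.mk_apply, Algebra.TensorProduct.one_def]
  induction T.Φinv l₁ a l₂ using TensorProduct.induction_on₃ with
  | zero => simp
  | add s t hs ht => simp only [map_add, LinearMap.add_apply, hs, ht]
  | tmul y₁ y₂ y₃ =>
    simp only [coactSnd, LinearMap.comp_apply, LinearMap.rTensor_tmul]
    induction coact l₂ v using TensorProduct.induction_on with
    | zero => simp
    | add s t hs ht => simp only [map_add, TensorProduct.add_tmul, hs, ht]
    | tmul v' w =>
      simp only [coactFst, TensorProduct.leftComm, LinearMap.comp_apply, LinearEquiv.coe_coe,
        LinearEquiv.trans_apply, assoc_symm_tmul, congr_tmul, comm_tmul, LinearEquiv.coe_one,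
        id_eq, assoc_tmul, pmapTens_tmul, pcomp_tmul, pright_apply, AlgHom.coe_toLinearMap,
        map_tmul, LinearMap.llcomp_apply, LinearMap.mul_apply_apply, LinearMap.lTensor_tmul,
        LinearMap.mul'_apply, mul_one, legActMid_tmul, LinearMap.rTensor_tmul]
      induction coact l₁ (ρV y₂ v') using TensorProduct.induction_on with
      | zero => simp
      | add s t hs ht => simp only [map_add, TensorProduct.add_tmul, hs, ht]
      | tmul z₀ z₁ => simp

noncomputable def comulCoact : V →ₗ[k] V ⊗[k] (H l₁ ⊗[k] H l₂) :=
  LinearMap.lTensor V (T.Δ l₁ l₂).toLinearMap ∘ₗ coact (l₁ * l₂)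

lemma ydCoassocRHS_eq :
    ydCoassocRHS T ρV coact l₁ l₂
      = legAct ρV l₁ l₂ (T.Φinv a l₁ l₂) ∘ₗ
          sandwich ρV l₁ l₂ (comulCoact T coact l₁ l₂) (T.Φinv l₁ l₂ a) := rfl

lemma legAct_Φ_comp_sandwich_ydCoassocLHS (hcoassoc : T.ydCoassocProp ρV coact) :
    legAct ρV l₁ l₂ (T.Φ a l₁ l₂) ∘ₗ
        sandwich ρV l₁ l₂ (ydCoassocLHS T ρV coact l₁ l₂) (T.Φ l₁ l₂ a)
      = comulCoact T coact l₁ l₂ := by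
  rw [hcoassoc l₁ l₂, ydCoassocRHS_eq, ← comp_sandwich ρV l₁ l₂ (legAct_commutes ρV l₁ l₂ _),
    sandwich_sandwich, T.Φinv_mul_Φ, sandwich_one, ← LinearMap.comp_assoc, ← legAct_mul,
    T.Φ_mul_Φinv, legAct_one, LinearMap.id_comp]

lemma hexagon_on_legs_eq_comulCoact (hcoassoc : T.ydCoassocProp ρV coact) :
    legAct ρV l₁ l₂ (T.Φ a l₁ l₂) ∘ₗ coactFst coact l₁ l₂ ∘ₗ
        legActMid ρV l₁ l₂ (T.Φinv l₁ a l₂) ∘ₗ coactSnd coact l₁ l₂ ∘ₗ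
        sandwich ρV l₁ l₂ ((TensorProduct.mk k V (H l₁ ⊗[k] H l₂)).flip 1) (T.Φ l₁ l₂ a)
      = comulCoact T coact l₁ l₂ := by
  rw [comp_sandwich ρV l₁ l₂ (coactSnd_commutes coact l₁ l₂),
    comp_sandwich ρV l₁ l₂ (legActMid_commutes ρV l₁ l₂ _),
    comp_sandwich ρV l₁ l₂ (coactFst_commutes coact l₁ l₂), ← ydCoassocLHS_eq,
    legAct_Φ_comp_sandwich_ydCoassocLHS T ρV coact l₁ l₂ hcoassoc]

end Coassoc

variable {l₁ l₂ : π} {X₁ X₂ : Type u} [AddCommGroup X₁] [Module k X₁] [AddCommGroup X₂]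
  [Module k X₂] (ρ₁ : H l₁ →ₐ[k] Module.End k X₁) (ρ₂ : H l₂ →ₐ[k] Module.End k X₂)

lemma ydBraidInv_tensAlg :
    ydBraidInv coact (T.tensAlg ρ₁ ρ₂)
      = evalLegs ρ₁ ρ₂ ∘ₗ LinearMap.rTensor (X₁ ⊗[k] X₂) (comulCoact T coact l₁ l₂) ∘ₗ
          (TensorProduct.comm k (X₁ ⊗[k] X₂) V).toLinearMap := by
  ext x₁ x₂ v
  simp only [ydBraidInv, comulCoact, LinearMap.comp_apply,
    TensorProduct.AlgebraTensorModule.curry_apply, TensorProduct.curry_apply,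
    LinearMap.coe_restrictScalars, LinearEquiv.coe_coe, TensorProduct.comm_tmul,
    LinearMap.rTensor_tmul]
  induction coact (l₁ * l₂) v using TensorProduct.induction_on with
  | zero => simp
  | add s t hs ht => simp only [map_add, TensorProduct.add_tmul, hs, ht]
  | tmul v' h =>
    simp only [TensorProduct.assoc_tmul, LinearMap.lTensor_tmul, aev, TensorProduct.lift.tmul,
      AlgHom.toLinearMap_apply, tensAlg, AlgHom.comp_apply]
    induction T.Δ l₁ l₂ h using TensorProduct.induction_on with
    | zero => simp
    | add s t hs ht =>
      simp only [map_add, LinearMap.add_apply, TensorProduct.tmul_add, TensorProduct.add_tmul,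
        hs, ht]
    | tmul b c => simp [Module.endTensorEndAlgHom_apply]

lemma assocMod_conjAlg_conjAlg :
    T.assocMod (T.conjAlg ρ₁ a) (T.conjAlg ρ₂ a) ρV
      = ((TensorProduct.comm k V (X₁ ⊗[k] X₂)).trans
            (TensorProduct.assoc k X₁ X₂ V)).toLinearMap ∘ₗ evalLegs ρ₁ ρ₂ ∘ₗ
          LinearMap.rTensor (X₁ ⊗[k] X₂)
            (sandwich ρV l₁ l₂ ((TensorProduct.mk k V (H l₁ ⊗[k] H l₂)).flip 1) (T.Φ l₁ l₂ a)) ∘ₗ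
          (TensorProduct.comm k (X₁ ⊗[k] X₂) V).toLinearMap := by
  have hΦ : T.assocMod (T.conjAlg ρ₁ a) (T.conjAlg ρ₂ a) ρV
      = pmapTens ρ₁.toLinearMap (pmapTens ρ₂.toLinearMap ρV.toLinearMap) (T.Φ l₁ l₂ a) ∘ₗ
          (TensorProduct.assoc k X₁ X₂ V).toLinearMap := by
    rw [assocMod, conjAlg_eq_comp_unconj, conjAlg_eq_comp_unconj, AlgHom.comp_toLinearMap,
      AlgHom.comp_toLinearMap, ← LinearMap.comp_id ρV.toLinearMap, pmapTens_comp_map,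
      pmapTens_comp_map, LinearMap.comp_apply, map_unconj_Φ, LinearMap.comp_id]
  rw [hΦ]
  ext x₁ x₂ v
  simp only [LinearMap.comp_apply, TensorProduct.AlgebraTensorModule.curry_apply,
    TensorProduct.curry_apply, LinearMap.coe_restrictScalars, LinearEquiv.coe_coe,
    TensorProduct.assoc_tmul, TensorProduct.comm_tmul, LinearMap.rTensor_tmul]
  induction T.Φ l₁ l₂ a using TensorProduct.induction_on₃ with
  | zero => simp
  | add s t hs ht => simp only [map_add, LinearMap.add_apply, TensorProduct.add_tmul, hs, ht]
  | tmul u₁ u₂ u₃ => simp [Algebra.TensorProduct.one_def]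

variable {W : Type*} [AddCommGroup W] [Module k W]
  (g : W →ₗ[k] (V ⊗[k] (H l₁ ⊗[k] H l₂)) ⊗[k] (X₁ ⊗[k] X₂))

lemma assocModInv_comp_evalLegs :
    T.assocModInv (T.conjAlg ρ₁ a) ρV ρ₂ ∘ₗ (TensorProduct.leftComm k V X₁ X₂).toLinearMap ∘ₗ
        evalLegs ρ₁ ρ₂ ∘ₗ g
      = ((TensorProduct.leftComm k V X₁ X₂).trans
            (TensorProduct.assoc k X₁ V X₂).symm).toLinearMap ∘ₗ evalLegs ρ₁ ρ₂ ∘ₗ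
          LinearMap.rTensor (X₁ ⊗[k] X₂) (legActMid ρV l₁ l₂ (T.Φinv l₁ a l₂)) ∘ₗ g := by
  have hΦ : T.assocModInv (T.conjAlg ρ₁ a) ρV ρ₂
      = (TensorProduct.assoc k X₁ V X₂).symm.toLinearMap ∘ₗ
          pmapTens ρ₁.toLinearMap (pmapTens ρV.toLinearMap ρ₂.toLinearMap) (T.Φinv l₁ a l₂) := by
    rw [assocModInv, conjAlg_eq_comp_unconj, AlgHom.comp_toLinearMap,
      ← LinearMap.comp_id (pmapTens ρV.toLinearMap ρ₂.toLinearMap), pmapTens_comp_map,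
      LinearMap.comp_apply, map_unconj_Φinv_left, LinearMap.comp_id]
  rw [hΦ]
  simp only [← LinearMap.comp_assoc]
  congr 1
  ext v b c x₁ x₂
  simp only [LinearMap.comp_apply, TensorProduct.AlgebraTensorModule.curry_apply,
    TensorProduct.curry_apply, LinearMap.coe_restrictScalars, LinearEquiv.coe_coe,
    LinearMap.rTensor_tmul, evalLegs_tmul, LinearEquiv.trans_apply]
  induction T.Φinv l₁ a l₂ using TensorProduct.induction_on₃ with
  | zero => simp
  | add s t hs ht => simp only [map_add, LinearMap.add_apply, TensorProduct.add_tmul, hs, ht]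
  | tmul y₁ y₂ y₃ => simp [TensorProduct.leftComm]

lemma assocMod_comp_evalLegs :
    T.assocMod ρV ρ₁ ρ₂ ∘ₗ (TensorProduct.assoc k V X₁ X₂).symm.toLinearMap ∘ₗ
        evalLegs ρ₁ ρ₂ ∘ₗ g
      = evalLegs ρ₁ ρ₂ ∘ₗ
          LinearMap.rTensor (X₁ ⊗[k] X₂) (legAct ρV l₁ l₂ (T.Φ a l₁ l₂)) ∘ₗ g := by
  simp only [← LinearMap.comp_assoc]
  congr 1
  ext v b c x₁ x₂
  simp only [assocMod, LinearMap.comp_apply, TensorProduct.AlgebraTensorModule.curry_apply,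
    TensorProduct.curry_apply, LinearMap.coe_restrictScalars, LinearEquiv.coe_coe,
    LinearMap.rTensor_tmul, evalLegs_tmul, TensorProduct.assoc_symm_tmul,
    TensorProduct.assoc_tmul]
  induction T.Φ a l₁ l₂ using TensorProduct.induction_on₃ with
  | zero => simp
  | add s t hs ht => simp only [map_add, LinearMap.add_apply, TensorProduct.add_tmul, hs, ht]
  | tmul p₁ p₂ p₃ => simp

end Hexagon

end QuasiTuraevGCoalgebra

section Statements
variable {k : Type u} [Field k] {π : Type v} [Group π]
variable {H : π → Type u} [∀ a, Ring (H a)] [∀ a, Algebra k (H a)]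
open QuasiTuraevGCoalgebra

/-- The half-braiding induced by a Yetter-Drinfeld coaction satisfies the
hexagon identity (stated for the inverses `c⁻¹ = ĉ`). -/
theorem stmt13 (T : QuasiTuraevGCoalgebra k H) {a : π} {V : Type u}
    [AddCommGroup V] [Module k V]
    (ρV : H a →ₐ[k] Module.End k V) (coact : ∀ l : π, V →ₗ[k] V ⊗[k] H l)
    (hYD : T.IsYD ρV coact) (l₁ l₂ : π) (X₁ X₂ : Type u)
    [AddCommGroup X₁] [Module k X₁] [AddCommGroup X₂] [Module k X₂]
    (ρ₁ : H l₁ →ₐ[k] Module.End k X₁) (ρ₂ : H l₂ →ₐ[k] Module.End k X₂) :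
    ydBraidInv coact (T.tensAlg ρ₁ ρ₂)
      = T.assocMod ρV ρ₁ ρ₂ ∘ₗ
        LinearMap.rTensor X₂ (ydBraidInv coact ρ₁) ∘ₗ
        T.assocModInv (T.conjAlg ρ₁ a) ρV ρ₂ ∘ₗ
        LinearMap.lTensor X₁ (ydBraidInv coact ρ₂) ∘ₗ
        T.assocMod (T.conjAlg ρ₁ a) (T.conjAlg ρ₂ a) ρV := by
  have hlegs := congrArg (LinearMap.rTensor (X₁ ⊗[k] X₂))
    (hexagon_on_legs_eq_comulCoact T ρV coact l₁ l₂ hYD.2.1)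
  simp only [LinearMap.rTensor_comp] at hlegs
  rw [ydBraidInv_tensAlg, assocMod_conjAlg_conjAlg, lTensor_ydBraidInv_comp_evalLegs,
    assocModInv_comp_evalLegs, rTensor_ydBraidInv_comp_evalLegs, assocMod_comp_evalLegs, ← hlegs]
  simp only [LinearMap.comp_assoc]


end Statements
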